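/- arXiv:2508.12861 — 2 statements merged into one kernel-verified Lean document; each statement's English description precedes it below -/
import Mathlib

section
/- Let C be a positive natural number and let p ∈ ℝ^C be a fixed probability vector with strictly positive components. Consider deviation vectors δ ∈ ℝ^C in the hyperplane H = {δ : ∑_{i=1}^{C} δ_i = 0}. Then, as δ → 0 within H, the Jeffreys divergence satisfies D_J(p, p + δ) = ∑_{i=1}^{C} δ_i²/p_i − (1/2)·∑_{i=1}^{C} δ_i³/p_i² + O(‖δ‖⁴); equivalently, using the closed form D_J(p, p+δ) = ∑_i δ_i·(log(p_i + δ_i) − log p_i), the difference between this quantity and ∑ δ_i²/p_i − (1/2)∑ δ_i³/p_i² is O(‖δ‖⁴) as δ → 0 in H. -/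
/-!
Near `δ = 0` the sum of the two divergences agrees with the closed form
`∑ δᵢ (log (pᵢ + δᵢ) - log pᵢ)`, whose `i`-th term is `δᵢ log (1 + δᵢ / pᵢ)`.
The Taylor estimate
`|log (1 + x) - (x - x² / 2)| ≤ 2 |x|³` for `|x| ≤ 1/2` makes each term
`δᵢ² / pᵢ - δᵢ³ / (2 pᵢ²) + O(δᵢ⁴)`, and `|δᵢ| ≤ ‖δ‖`.
-/

open Real Finset Filter Asymptotics Topology

lemma abs_log_one_add_sub_le {x : ℝ} (hx : |x| ≤ 1 / 2) :
    |log (1 + x) - (x - x ^ 2 / 2)| ≤ 2 * |x| ^ 3 := by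
  have h := abs_log_sub_add_sum_range_le (x := -x) (by rw [abs_neg]; linarith) 2
  norm_num [sum_range_succ] at h
  calc |log (1 + x) - (x - x ^ 2 / 2)| = |-x + x ^ 2 / 2 + log (1 + x)| := by ring_nf
    _ ≤ |x| ^ 3 / (1 - |x|) := h
    _ ≤ 2 * |x| ^ 3 := by
        rw [div_le_iff₀ (by linarith)]
        nlinarith [pow_nonneg (abs_nonneg x) 3]

lemma log_one_add_sub_isBigO :
    (fun x : ℝ => log (1 + x) - (x - x ^ 2 / 2)) =O[𝓝 0] fun x => x ^ 3 := by
  refine isBigO_iff.2 ⟨2, ?_⟩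
  filter_upwards [Metric.closedBall_mem_nhds (0 : ℝ) (by norm_num : (0 : ℝ) < 1 / 2)] with x hx
  rw [mem_closedBall_zero_iff, norm_eq_abs] at hx
  simpa only [norm_eq_abs, abs_pow] using abs_log_one_add_sub_le hx

lemma log_add_sub_log_sub_isBigO {p : ℝ} (hp : 0 < p) :
    (fun t : ℝ => log (p + t) - log p - (t / p - t ^ 2 / (2 * p ^ 2))) =O[𝓝 0]
      fun t => t ^ 3 := by
  have hlim : Tendsto (fun t : ℝ => p⁻¹ * t) (𝓝 0) (𝓝 0) := by
    simpa using (continuous_const_mul p⁻¹).tendsto 0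
  have hcube : (fun t : ℝ => (p⁻¹ * t) ^ 3) =O[𝓝 0] fun t => t ^ 3 :=
    ((isBigO_refl (fun t : ℝ => t) _).const_mul_left p⁻¹).pow 3
  refine ((log_one_add_sub_isBigO.comp_tendsto hlim).trans hcube).congr' ?_ .rfl
  filter_upwards [((continuous_const_add p).tendsto' 0 p (add_zero p)).eventually_const_lt hp]
    with t ht
  have hlog : log (1 + p⁻¹ * t) = log (p + t) - log p := by
    rw [← log_div ht.ne' hp.ne']
    congr 1
    field_simp
  simp only [Function.comp_apply, hlog]
  ring

lemma mul_log_add_sub_log_sub_isBigO {p : ℝ} (hp : 0 < p) :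
    (fun t : ℝ => t * (log (p + t) - log p) - (t ^ 2 / p - t ^ 3 / (2 * p ^ 2))) =O[𝓝 0]
      fun t => t ^ 4 :=
  ((isBigO_refl (fun t : ℝ => t) _).mul (log_add_sub_log_sub_isBigO hp)).congr
    (fun t => by ring) fun t => by ring

lemma mul_log_div_add_mul_log_div {p t : ℝ} (hp : p ≠ 0) (hpt : p + t ≠ 0) :
    p * log (p / (p + t)) + (p + t) * log ((p + t) / p) = t * (log (p + t) - log p) := by
  rw [log_div hp hpt, log_div hpt hp]
  ring

variable {ι : Type*} [Fintype ι] {p : ι → ℝ}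

lemma eventually_forall_add_pos (hp : ∀ i, 0 < p i) :
    ∀ᶠ δ : ι → ℝ in 𝓝 0, ∀ i, 0 < p i + δ i :=
  eventually_all.2 fun i =>
    (((continuous_const_add (p i)).tendsto' 0 (p i) (add_zero _)).comp
      ((continuous_apply i).tendsto' (0 : ι → ℝ) 0 rfl)).eventually_const_lt (hp i)

lemma sum_mul_log_add_sub_log_sub_isBigO (hp : ∀ i, 0 < p i) :
    (fun δ : ι → ℝ => ∑ i, (δ i * (log (p i + δ i) - log (p i)) -
        (δ i ^ 2 / p i - δ i ^ 3 / (2 * p i ^ 2)))) =O[𝓝 0] fun δ => ‖δ‖ ^ 4 := by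
  refine IsBigO.fun_sum fun i _ => ?_
  have hcoord : (fun δ : ι → ℝ => δ i ^ 4) =O[𝓝 0] fun δ => ‖δ‖ ^ 4 :=
    (isBigO_of_le _ fun δ => by simpa using norm_le_pi_norm δ i).pow 4
  exact ((mul_log_add_sub_log_sub_isBigO (hp i)).comp_tendsto
    ((continuous_apply i).tendsto' 0 0 rfl)).trans hcoord

theorem jeffreys_third_order_expansion_general (C : ℕ) (p : Fin C → ℝ)
    (hp : ∀ i, 0 < p i) :
    ((fun δ : Fin C → ℝ =>
        ((∑ i, p i * Real.log (p i / (p i + δ i))) +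
            (∑ i, (p i + δ i) * Real.log ((p i + δ i) / p i))) -
          ((∑ i, (δ i) ^ 2 / p i) - (1 / 2) * ∑ i, (δ i) ^ 3 / (p i) ^ 2))
      =O[nhdsWithin 0 {δ : Fin C → ℝ | ∑ i, δ i = 0}]
      (fun δ : Fin C → ℝ => ‖δ‖ ^ 4)) ∧
    ((fun δ : Fin C → ℝ =>
        (∑ i, δ i * (Real.log (p i + δ i) - Real.log (p i))) -
          ((∑ i, (δ i) ^ 2 / p i) - (1 / 2) * ∑ i, (δ i) ^ 3 / (p i) ^ 2))
      =O[nhdsWithin 0 {δ : Fin C → ℝ | ∑ i, δ i = 0}]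
      (fun δ : Fin C → ℝ => ‖δ‖ ^ 4)) := by
  have closed_form : (fun δ : Fin C → ℝ =>
        (∑ i, δ i * (log (p i + δ i) - log (p i))) -
          ((∑ i, δ i ^ 2 / p i) - 1 / 2 * ∑ i, δ i ^ 3 / p i ^ 2))
      =O[𝓝 0] fun δ => ‖δ‖ ^ 4 := by
    refine (sum_mul_log_add_sub_log_sub_isBigO hp).congr_left fun δ => ?_
    simp only [mul_sum, ← sum_sub_distrib]
    exact sum_congr rfl fun i _ => by ring
  refine ⟨?_, closed_form.mono nhdsWithin_le_nhds⟩
  refine (closed_form.congr' ?_ .rfl).mono nhdsWithin_le_nhds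
  filter_upwards [eventually_forall_add_pos hp] with δ hδ
  simp only [← sum_add_distrib, mul_log_div_add_mul_log_div (hp _).ne' (hδ _).ne']

/-- Third-order Taylor expansion of the Jeffreys divergence
`D_J(p, p + δ) = ∑ δᵢ²/pᵢ - (1/2) ∑ δᵢ³/pᵢ² + O(‖δ‖⁴)` as `δ → 0` within the
hyperplane `{δ : ∑ δᵢ = 0}`, stated both via the sum of the two KL divergences
and via the closed form `D_J(p, p+δ) = ∑ δᵢ (log (pᵢ + δᵢ) - log pᵢ)`. -/
theorem jeffreys_third_order_expansion (C : ℕ) (hC : 0 < C) (p : Fin C → ℝ)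
    (hp : ∀ i, 0 < p i) (hpsum : ∑ i, p i = 1) :
    ((fun δ : Fin C → ℝ =>
        ((∑ i, p i * Real.log (p i / (p i + δ i))) +
            (∑ i, (p i + δ i) * Real.log ((p i + δ i) / p i))) -
          ((∑ i, (δ i) ^ 2 / p i) - (1 / 2) * ∑ i, (δ i) ^ 3 / (p i) ^ 2))
      =O[nhdsWithin 0 {δ : Fin C → ℝ | ∑ i, δ i = 0}]
      (fun δ : Fin C → ℝ => ‖δ‖ ^ 4)) ∧
    ((fun δ : Fin C → ℝ =>
        (∑ i, δ i * (Real.log (p i + δ i) - Real.log (p i))) -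
          ((∑ i, (δ i) ^ 2 / p i) - (1 / 2) * ∑ i, (δ i) ^ 3 / (p i) ^ 2))
      =O[nhdsWithin 0 {δ : Fin C → ℝ | ∑ i, δ i = 0}]
      (fun δ : Fin C → ℝ => ‖δ‖ ^ 4)) :=
  jeffreys_third_order_expansion_general C p hp
end

section
/- Let C be a positive natural number and let p ∈ ℝ^C be a fixed probability vector with strictly positive components. Consider deviation vectors δ ∈ ℝ^C in the hyperplane H = {δ : ∑_{i=1}^{C} δ_i = 0}. Then, as δ → 0 within H, the squared Fisher–Rao geodesic distance on the probability simplex satisfies d²(p, p + δ) = (2·arccos(∑_{i=1}^{C} √(p_i·(p_i + δ_i))))² = ∑_{i=1}^{C} δ_i²/p_i − (1/2)·∑_{i=1}^{C} δ_i³/p_i² + O(‖δ‖⁴); that is, the difference between (2·arccos(∑ √(p_i(p_i+δ_i))))² and ∑ δ_i²/p_i − (1/2)∑ δ_i³/p_i² is O(‖δ‖⁴) as δ → 0 in H. -/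
/-!
Write `B(δ) = ∑ √(pᵢ (pᵢ + δᵢ))`. On the hyperplane `∑ δᵢ = 0` we have
`1 - B = ∑ (pᵢ + δᵢ/2 - √(pᵢ (pᵢ + δᵢ)))`, and the cubic Taylor expansion of `d ↦ √(p (p + d))`
gives `8 (1 - B) = ∑ δᵢ²/pᵢ - ½ ∑ δᵢ³/pᵢ² + O(‖δ‖⁴)`; in particular `1 - B = O(‖δ‖²)`, and
`B ≤ 1` near `0` by AM-GM. Near `b = 1⁻` the quartic bound on `cos` gives
`arccos² b = 2 (1 - b) + O((1 - b)²)`, hence `(2 arccos B)² = 8 (1 - B) + O(‖δ‖⁴)`.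
-/

open Real Finset Filter Asymptotics Topology

lemma abs_sqrt_one_add_sub_taylor_le {x : ℝ} (hx : |x| ≤ 1 / 2) :
    |√(1 + x) - (1 + x / 2 - x ^ 2 / 8 + x ^ 3 / 16)| ≤ x ^ 4 := by
  obtain ⟨hx₁, hx₂⟩ := abs_le.mp hx
  have hx2 : x ^ 2 ≤ 1 / 4 := by nlinarith
  have hx3 : -(1 / 8) ≤ x ^ 3 := by
    nlinarith [mul_nonneg (sq_nonneg x) (by linarith : 0 ≤ x + 1 / 2)]
  have hx4 : 0 ≤ x ^ 4 := by positivity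
  have hx4' : x ^ 4 ≤ 1 / 16 := by nlinarith
  set P := 1 + x / 2 - x ^ 2 / 8 + x ^ 3 / 16 with hP
  set Q := 5 / 64 - x / 64 + x ^ 2 / 256 with hQ
  -- `P` is the cubic Taylor polynomial of `√(1 + x)`, so `P²` agrees with `1 + x` to fourth order.
  have hsq : P ^ 2 = 1 + x + x ^ 4 * Q := by ring
  have hP_ge : 5 / 8 ≤ P := by linarith
  have hQ_nonneg : 0 ≤ Q := by nlinarith
  have hQ_le : Q ≤ 1 / 8 := by linarith
  have hupper : √(1 + x) ≤ P + x ^ 4 :=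
    sqrt_le_iff.2 ⟨by linarith, by nlinarith [mul_nonneg hx4 hQ_nonneg]⟩
  have hlower : P - x ^ 4 ≤ √(1 + x) :=
    le_sqrt_of_sq_le (by nlinarith [mul_nonneg hx4 hQ_nonneg])
  rw [abs_le]; constructor <;> linarith

lemma isBigO_sqrt_one_add_sub_taylor :
    (fun x : ℝ => √(1 + x) - (1 + x / 2 - x ^ 2 / 8 + x ^ 3 / 16)) =O[𝓝 0] fun x => x ^ 4 := by
  refine IsBigO.of_bound 1 ?_
  filter_upwards [Metric.closedBall_mem_nhds (0 : ℝ) (by norm_num : (0 : ℝ) < 1 / 2)] with x hx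
  rw [Metric.mem_closedBall, dist_zero_right, norm_eq_abs] at hx
  rw [norm_eq_abs, norm_eq_abs, abs_of_nonneg (by positivity : 0 ≤ x ^ 4), one_mul]
  exact abs_sqrt_one_add_sub_taylor_le hx

lemma isBigO_sqrt_mul_add_sub_taylor {p : ℝ} (hp : 0 < p) :
    (fun d : ℝ => √(p * (p + d)) - (p + d / 2 - d ^ 2 / (8 * p) + d ^ 3 / (16 * p ^ 2)))
      =O[𝓝 0] fun d => d ^ 4 := by
  have hdiv : Tendsto (fun d : ℝ => d / p) (𝓝 0) (𝓝 0) := by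
    simpa using (tendsto_id (x := 𝓝 (0 : ℝ))).div_const p
  have hscale : (fun d : ℝ => (d / p) ^ 4) =O[𝓝 0] fun d => d ^ 4 :=
    ((isBigO_refl (fun d : ℝ => d ^ 4) (𝓝 0)).const_mul_left (p ^ 4)⁻¹).congr_left
      fun d => by ring
  refine (((isBigO_sqrt_one_add_sub_taylor.comp_tendsto hdiv).trans hscale).const_mul_left
    p).congr_left fun d => ?_
  have hsqrt : √(p * (p + d)) = p * √(1 + d / p) := by
    rw [show p * (p + d) = p ^ 2 * (1 + d / p) by field_simp, sqrt_mul (sq_nonneg p),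
      sqrt_sq hp.le]
  simp only [Function.comp, hsqrt]
  field_simp

lemma isBigO_add_half_sub_sqrt_mul {p : ℝ} (hp : 0 < p) :
    (fun d : ℝ => p + d / 2 - √(p * (p + d))) =O[𝓝 0] fun d => d ^ 2 := by
  have h4 := (isBigO_sqrt_mul_add_sub_taylor hp).trans
    (isLittleO_pow_pow (by norm_num : 2 < 4)).isBigO
  have h3 := (isLittleO_pow_pow (𝕜 := ℝ) (by norm_num : 2 < 3)).isBigO
  refine ((((isBigO_refl _ _).const_mul_left (1 / (8 * p))).sub
    (h3.const_mul_left (1 / (16 * p ^ 2)))).sub h4).congr_left fun d => ?_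
  ring

lemma sqrt_mul_add_le_add_half {p d : ℝ} (h : 0 ≤ p + d / 2) : √(p * (p + d)) ≤ p + d / 2 :=
  sqrt_le_iff.2 ⟨h, by nlinarith [sq_nonneg d]⟩

lemma abs_sq_sub_two_mul_one_sub_cos_le {θ : ℝ} (h₀ : 0 ≤ θ) (h₁ : θ ≤ 1) :
    |θ ^ 2 - 2 * (1 - cos θ)| ≤ (1 - cos θ) ^ 2 := by
  have hcos := cos_bound (x := θ) (by rwa [abs_of_nonneg h₀])
  rw [abs_of_nonneg h₀] at hcos
  obtain ⟨hc₁, hc₂⟩ := abs_le.mp hcos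
  have hθ2 : θ ^ 2 ≤ 1 := by nlinarith
  have hθ4 : θ ^ 4 ≤ θ ^ 2 := by nlinarith [mul_le_mul_of_nonneg_left hθ2 (sq_nonneg θ)]
  -- `cos_bound` gives `1 - cos θ ≥ (43/96) θ²`, and `(43/96)² > 2 · 5/96` absorbs its error term.
  have hgap : 43 / 96 * θ ^ 2 ≤ 1 - cos θ := by nlinarith
  have hgap_sq : (43 / 96) ^ 2 * θ ^ 4 ≤ (1 - cos θ) ^ 2 := by
    nlinarith [mul_le_mul hgap hgap (by positivity) (by linarith)]
  rw [abs_le]; constructor <;> nlinarith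

lemma isBigO_arccos_sq_sub :
    (fun b => arccos b ^ 2 - 2 * (1 - b)) =O[𝓝[≤] 1] fun b => (1 - b) ^ 2 := by
  refine IsBigO.of_bound 1 ?_
  filter_upwards [Icc_mem_nhdsLE (cos_one_le.trans_lt (by norm_num))] with b ⟨hb₁, hb₂⟩
  have hθ : arccos b ≤ 1 := by
    simpa [arccos_cos zero_le_one (by linarith [pi_gt_three])] using arccos_le_arccos hb₁
  have hcos : cos (arccos b) = b := cos_arccos (by linarith [cos_one_pos]) hb₂
  simpa [norm_eq_abs, hcos] using abs_sq_sub_two_mul_one_sub_cos_le (arccos_nonneg b) hθ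

lemma isBigO_sum_apply_norm_pow {ι : Type*} [Fintype ι] {f : ι → ℝ → ℝ} {n : ℕ}
    (hf : ∀ i, f i =O[𝓝 0] fun d => d ^ n) :
    (fun δ : ι → ℝ => ∑ i, f i (δ i)) =O[𝓝 0] fun δ => ‖δ‖ ^ n := by
  refine IsBigO.fun_sum fun i _ => ?_
  have hcoord : (fun δ : ι → ℝ => δ i ^ n) =O[𝓝 0] fun δ => ‖δ‖ ^ n :=
    IsBigO.of_bound 1 <| Eventually.of_forall fun δ => by
      simpa [norm_pow] using pow_le_pow_left₀ (norm_nonneg _) (norm_le_pi_norm δ i) n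
  exact ((hf i).comp_tendsto ((continuous_apply i).tendsto' 0 0 rfl)).trans hcoord

section Simplex

variable {ι : Type*} [Fintype ι] {p : ι → ℝ}

lemma one_sub_sum_sqrt_mul_add_eq (hpsum : ∑ i, p i = 1) {δ : ι → ℝ} (hδ : ∑ i, δ i = 0) :
    1 - ∑ i, √(p i * (p i + δ i)) = ∑ i, (p i + δ i / 2 - √(p i * (p i + δ i))) := by
  rw [sum_sub_distrib, sum_add_distrib, ← sum_div, hpsum, hδ]
  ring

lemma isBigO_one_sub_sum_sqrt_mul_add (hp : ∀ i, 0 < p i) (hpsum : ∑ i, p i = 1) :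
    (fun δ : ι → ℝ => 1 - ∑ i, √(p i * (p i + δ i))) =O[𝓝[{δ | ∑ i, δ i = 0}] 0]
      fun δ => ‖δ‖ ^ 2 :=
  ((isBigO_sum_apply_norm_pow fun i => isBigO_add_half_sub_sqrt_mul (hp i)).mono
    nhdsWithin_le_nhds).congr'
    (eventually_nhdsWithin_of_forall fun _ hδ => (one_sub_sum_sqrt_mul_add_eq hpsum hδ).symm)
    EventuallyEq.rfl

lemma isBigO_eight_mul_one_sub_sum_sqrt_mul_add_sub (hp : ∀ i, 0 < p i)
    (hpsum : ∑ i, p i = 1) :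
    (fun δ : ι → ℝ => 8 * (1 - ∑ i, √(p i * (p i + δ i))) -
        ((∑ i, δ i ^ 2 / p i) - (1 / 2) * ∑ i, δ i ^ 3 / p i ^ 2))
      =O[𝓝[{δ | ∑ i, δ i = 0}] 0] fun δ => ‖δ‖ ^ 4 := by
  refine ((isBigO_sum_apply_norm_pow fun i =>
    (isBigO_sqrt_mul_add_sub_taylor (hp i)).const_mul_left (-8)).mono
    nhdsWithin_le_nhds).congr' (eventually_nhdsWithin_of_forall fun δ hδ => ?_) EventuallyEq.rfl
  beta_reduce
  rw [one_sub_sum_sqrt_mul_add_eq hpsum hδ, mul_sum, mul_sum, ← sum_sub_distrib,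
    ← sum_sub_distrib]
  refine sum_congr rfl fun i _ => ?_
  have := (hp i).ne'
  field_simp
  ring

lemma tendsto_sum_sqrt_mul_add_nhdsLE_one (hp : ∀ i, 0 < p i) (hpsum : ∑ i, p i = 1) :
    Tendsto (fun δ : ι → ℝ => ∑ i, √(p i * (p i + δ i))) (𝓝[{δ | ∑ i, δ i = 0}] 0)
      (𝓝[≤] 1) := by
  refine tendsto_nhdsWithin_iff.2 ⟨?_, ?_⟩
  · have hnorm : Tendsto (fun δ : ι → ℝ => ‖δ‖ ^ 2) (𝓝[{δ | ∑ i, δ i = 0}] 0) (𝓝 0) := by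
      simpa using ((tendsto_norm_zero (E := ι → ℝ)).pow 2).mono_left nhdsWithin_le_nhds
    simpa using ((isBigO_one_sub_sum_sqrt_mul_add hp hpsum).trans_tendsto hnorm).const_sub 1
  · have hcoord : ∀ᶠ δ in 𝓝 (0 : ι → ℝ), ∀ i, -(2 * p i) ≤ δ i :=
      eventually_all.2 fun i => ((continuous_apply i).tendsto' 0 0 rfl).eventually
        (eventually_ge_nhds (by linarith [hp i]))
    filter_upwards [self_mem_nhdsWithin, nhdsWithin_le_nhds hcoord] with δ hδ hδc
    have hterms : 0 ≤ ∑ i, (p i + δ i / 2 - √(p i * (p i + δ i))) :=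
      sum_nonneg fun i _ => sub_nonneg.2 (sqrt_mul_add_le_add_half (by linarith [hδc i]))
    exact Set.mem_Iic.2 (by linarith [one_sub_sum_sqrt_mul_add_eq hpsum hδ])

end Simplex

theorem fisher_rao_distance_third_order_expansion_general (C : ℕ)
    (p : Fin C → ℝ) (hp : ∀ i, 0 < p i) (hpsum : ∑ i, p i = 1) :
    (fun δ : Fin C → ℝ =>
        (2 * Real.arccos (∑ i, Real.sqrt (p i * (p i + δ i)))) ^ 2 -
          ((∑ i, (δ i) ^ 2 / p i) - (1 / 2) * ∑ i, (δ i) ^ 3 / (p i) ^ 2))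
      =O[nhdsWithin 0 {δ : Fin C → ℝ | ∑ i, δ i = 0}]
      (fun δ : Fin C → ℝ => ‖δ‖ ^ 4) := by
  have hgap_sq : (fun δ : Fin C → ℝ => (1 - ∑ i, √(p i * (p i + δ i))) ^ 2)
      =O[𝓝[{δ | ∑ i, δ i = 0}] 0] fun δ => ‖δ‖ ^ 4 := by
    simpa only [← pow_mul] using (isBigO_one_sub_sum_sqrt_mul_add hp hpsum).pow 2
  have harccos := (isBigO_arccos_sq_sub.comp_tendsto
    (tendsto_sum_sqrt_mul_add_nhdsLE_one hp hpsum)).trans hgap_sq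
  refine ((harccos.const_mul_left 4).add
    (isBigO_eight_mul_one_sub_sum_sqrt_mul_add_sub hp hpsum)).congr_left fun δ => ?_
  simp only [Function.comp]
  ring

/-- Third-order expansion of the squared Fisher–Rao geodesic distance on the
probability simplex:
`(2 arccos (∑ √(pᵢ (pᵢ + δᵢ))))² = ∑ δᵢ²/pᵢ - (1/2) ∑ δᵢ³/pᵢ² + O(‖δ‖⁴)`
as `δ → 0` within the hyperplane `{δ : ∑ δᵢ = 0}`. -/
theorem fisher_rao_distance_third_order_expansion (C : ℕ) (hC : 0 < C)
    (p : Fin C → ℝ) (hp : ∀ i, 0 < p i) (hpsum : ∑ i, p i = 1) :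
    (fun δ : Fin C → ℝ =>
        (2 * Real.arccos (∑ i, Real.sqrt (p i * (p i + δ i)))) ^ 2 -
          ((∑ i, (δ i) ^ 2 / p i) - (1 / 2) * ∑ i, (δ i) ^ 3 / (p i) ^ 2))
      =O[nhdsWithin 0 {δ : Fin C → ℝ | ∑ i, δ i = 0}]
      (fun δ : Fin C → ℝ => ‖δ‖ ^ 4) :=
  fisher_rao_distance_third_order_expansion_general C p hp hpsum
end
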